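/- arXiv:1812.07919 — 4 statements merged into one kernel-verified Lean document; each statement's English description precedes it below -/
import Mathlib

section
/- Let $(T^+, \Delta^+)$ be a coassociative counital Hopf algebra with counit $\mathbf{1}'$ and basis $\mathcal{B}^+$. For $\sigma <^+ \tau$ in $\mathcal{B}^+$, one has $\Delta^+(\tau/^+\sigma) = (\tau/^+\sigma) \otimes \mathbf{1} + \mathbf{1} \otimes (\tau/^+\sigma) + \sum_{\sigma <^+ \eta <^+ \tau} (\eta/^+\sigma) \otimes (\tau/^+\eta)$. -/
open Finset

theorem Finset.sum_univ_eq_add_add_sum_filter_ne {ι M : Type*} [Fintype ι] [DecidableEq ι]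
    [AddCommMonoid M] {a b : ι} (hab : a ≠ b) (f : ι → M) :
    ∑ i, f i = f a + f b + ∑ i ∈ univ.filter (fun i => i ≠ a ∧ i ≠ b), f i := by
  rw [← sum_filter_not_add_sum_filter univ (fun i => i ≠ a ∧ i ≠ b)]
  have hpair : univ.filter (fun i => ¬(i ≠ a ∧ i ≠ b)) = {a, b} := by
    ext i; simp only [mem_filter, mem_univ, true_and, not_and_not_right, mem_insert,
      mem_singleton]; tauto
  rw [hpair, sum_pair hab]

section Coproduct

variable {B : Type*} [DecidableEq B] (dp : B → B → B → ℝ) (one : B) (deg : B → ℝ)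

theorem coproduct_coeff_self_left
    (hgrade : ∀ τ σ θ : B, dp τ σ θ ≠ 0 →
      (σ = τ ∧ θ = one) ∨ (σ = one ∧ θ = τ) ∨
        (0 < deg σ ∧ deg σ < deg τ ∧ deg σ + deg θ = deg τ))
    (hdiag : ∀ τ, dp τ τ one = 1) (ρ x : B) :
    dp ρ ρ x = if x = one then 1 else 0 := by
  split_ifs with hx
  · rw [hx, hdiag]
  · by_contra h
    rcases hgrade ρ ρ x h with ⟨-, hx'⟩ | ⟨hρ, hx'⟩ | ⟨-, hlt, -⟩
    · exact hx hx'
    · exact hx (hx'.trans hρ)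
    · exact lt_irrefl _ hlt

end Coproduct

theorem stmt2_general {Bp : Type*} [Fintype Bp] [DecidableEq Bp]
    (dp : Bp → Bp → Bp → ℝ) (one : Bp) (deg : Bp → ℝ)
    (hcoassoc : ∀ (τ a b c : Bp),
      ∑ σ : Bp, dp τ σ c * dp σ a b = ∑ θ : Bp, dp τ a θ * dp θ b c)
    (hgrade : ∀ τ σ θ : Bp, dp τ σ θ ≠ 0 →
      (σ = τ ∧ θ = one) ∨ (σ = one ∧ θ = τ) ∨
        (0 < deg σ ∧ deg σ < deg τ ∧ deg σ + deg θ = deg τ))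
    (hdiag : ∀ τ, dp τ τ one = 1)
    (τ σ : Bp) (hne : σ ≠ τ) :
    ∀ b c : Bp,
      ∑ θ : Bp, dp τ σ θ * dp θ b c
        = (if c = one then dp τ σ b else 0) + (if b = one then dp τ σ c else 0)
          + ∑ η ∈ univ.filter (fun η : Bp => η ≠ σ ∧ η ≠ τ), dp η σ b * dp τ η c := by
  intro b c
  -- Read coassociativity off at `σ ⊗ b ⊗ c`; in the sum over `η`, the terms `η = σ, τ` give
  -- the two primitive parts since `Δ⁺η` has `η ⊗ x` coefficient `δ_{x, 1}`.
  rw [← hcoassoc τ σ b c, sum_univ_eq_add_add_sum_filter_ne hne,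
    coproduct_coeff_self_left dp one deg hgrade hdiag σ b,
    coproduct_coeff_self_left dp one deg hgrade hdiag τ c]
  simp only [ite_mul, one_mul, zero_mul, mul_comm (dp τ _ c)]
  ring

/-- Let `T⁺` be a graded (connected) Hopf algebra with basis `Bp`, unit basis
element `one`, coproduct structure constants `dp θ b c = (Δ⁺θ)^{bc}`, and grading `deg`,
satisfying coassociativity and the triangular structure
`Δ⁺τ ∈ τ ⊗ 1 + 1 ⊗ τ + ∑_{0<β<|τ|} T⁺_β ⊗ T⁺_{|τ|-β}`.  For `σ <⁺ τ` (i.e. `σ ≠ τ` and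
`τ/⁺σ ≠ 0`, where `τ/⁺σ` has coordinates `θ ↦ dp τ σ θ`), one has
`Δ⁺(τ/⁺σ) = (τ/⁺σ) ⊗ 1 + 1 ⊗ (τ/⁺σ) + ∑_{σ <⁺ η <⁺ τ} (η/⁺σ) ⊗ (τ/⁺η)`,
in coordinates: for all `b c`. -/
theorem stmt2 {Bp : Type*} [Fintype Bp] [DecidableEq Bp]
    (dp : Bp → Bp → Bp → ℝ) (one : Bp) (deg : Bp → ℝ)
    (hone : deg one = 0)
    (hcoassoc : ∀ (τ a b c : Bp),
      ∑ σ : Bp, dp τ σ c * dp σ a b = ∑ θ : Bp, dp τ a θ * dp θ b c)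
    (hgrade : ∀ τ σ θ : Bp, dp τ σ θ ≠ 0 →
      (σ = τ ∧ θ = one) ∨ (σ = one ∧ θ = τ) ∨
        (0 < deg σ ∧ deg σ < deg τ ∧ deg σ + deg θ = deg τ))
    (hdiag : ∀ τ, dp τ τ one = 1)
    (hunit : ∀ τ, dp τ one τ = 1)
    (τ σ : Bp) (hne : σ ≠ τ) (hle : (fun θ => dp τ σ θ) ≠ 0) :
    ∀ b c : Bp,
      ∑ θ : Bp, dp τ σ θ * dp θ b c
        = (if c = one then dp τ σ b else 0) + (if b = one then dp τ σ c else 0)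
          + ∑ η ∈ univ.filter (fun η : Bp => η ≠ σ ∧ η ≠ τ), dp η σ b * dp τ η c :=
  stmt2_general dp one deg hcoassoc hgrade hdiag τ σ hne
end

section
/- Let $\mathscr{T} = (T^+, T)$ be a concrete regularity structure, $\mathsf{g} : \mathbb{R}^d \to G^+$ a map into the character group of $T^+$ satisfying the model bound $|\mathsf{g}_{yx}(\tau)| \lesssim |y - x|^{|\tau|}$ for all $\tau \in \mathcal{B}^+$, where $\mathsf{g}_{yx} = \mathsf{g}_y * \mathsf{g}_x^{-1}$. For $\tau \in \mathcal{B}$, define $\boldsymbol{h}_\tau(x) := \sum_{\sigma < \tau} \mathsf{g}_x(\tau/\sigma)\sigma$. Then $\boldsymbol{h}_\tau$ is a modelled distribution in $\mathcal{D}^{|\tau|}(\mathscr{T}, \mathsf{g})$, i.e. $\|\boldsymbol{h}_\tau(y) - \widehat{\mathsf{g}_{yx}}\boldsymbol{h}_\tau(x)\|_\beta \lesssim |y - x|^{|\tau| - \beta}$ for every homogeneity $\beta < |\tau|$. -/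
open Finset

lemma sum_rot3 {α β γ : Type*} [Fintype α] [Fintype β] [Fintype γ] (f : α → β → γ → ℝ) :
    ∑ a : α, ∑ b : β, ∑ c : γ, f a b c = ∑ c : γ, ∑ b : β, ∑ a : α, f a b c := by
  calc ∑ a : α, ∑ b : β, ∑ c : γ, f a b c
      = ∑ b : β, ∑ a : α, ∑ c : γ, f a b c := Finset.sum_comm
    _ = ∑ b : β, ∑ c : γ, ∑ a : α, f a b c :=
        Finset.sum_congr rfl fun b _ => Finset.sum_comm
    _ = ∑ c : γ, ∑ b : β, ∑ a : α, f a b c := Finset.sum_comm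

/-- Let `𝒯 = (T⁺, T)` be a concrete regularity structure, in coordinates: basis
`B` of `T` with homogeneity `deg`, basis `Bp` of `T⁺` with homogeneity `degp`, unit basis
element `one`, coaction constants `d` (with `Δτ = τ ⊗ 1 + (lower order)` and homogeneity
compatibility `d τ σ θ ≠ 0 → degp θ = deg τ - deg σ`), and coproduct constants `dp` satisfying
the comodule identity.  Let `g : ℝ^d → G⁺` be characters and `G y x = g_y * g_x⁻¹` (encoded by
the cocycle relation `g_y = g_{yx} * g_x`) satisfy the model bound `|g_{yx}(θ)| ≤ Cg ‖y-x‖^{|θ|}`.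
For `τ ∈ B` define `h_τ(x) = ∑_{σ<τ} g_x(τ/σ) σ`.  Then `h_τ ∈ 𝒟^{|τ|}(𝒯, g)`:
`‖h_τ(y) - ĝ_{yx} h_τ(x)‖_β ≲ ‖y-x‖^{|τ|-β}` for every homogeneity `β`, componentwise. -/
theorem stmt16 {dim : ℕ} {B Bp : Type*} [Fintype B] [Fintype Bp] [DecidableEq B] [DecidableEq Bp]
    (d : B → B → Bp → ℝ) (dp : Bp → Bp → Bp → ℝ) (one : Bp)
    (deg : B → ℝ) (degp : Bp → ℝ)
    (hcomodule : ∀ (τ a : B) (b c : Bp),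
      ∑ σ : B, d τ σ c * d σ a b = ∑ θ : Bp, d τ a θ * dp θ b c)
    (hdiag : ∀ (τ : B) (θ : Bp), d τ τ θ = if θ = one then 1 else 0)
    (htri : ∀ (τ σ : B) (θ : Bp), d τ σ θ ≠ 0 → σ = τ ∨ deg σ < deg τ)
    (hgradcomp : ∀ (τ σ : B) (θ : Bp), d τ σ θ ≠ 0 → degp θ = deg τ - deg σ)
    (g : EuclideanSpace ℝ (Fin dim) → Bp → ℝ)
    (G : EuclideanSpace ℝ (Fin dim) → EuclideanSpace ℝ (Fin dim) → Bp → ℝ)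
    -- `g_y = g_{yx} * g_x`
    (hcocycle : ∀ x y θ, g y θ = ∑ b : Bp, ∑ c : Bp, dp θ b c * G y x b * g x c)
    (Gone : ∀ x y, G y x one = 1)
    (Cg : ℝ)
    -- model bound `|g_{yx}(θ)| ≤ Cg ‖y-x‖^{|θ|}`
    (hGbound : ∀ x y θ, |G y x θ| ≤ Cg * ‖y - x‖ ^ (degp θ))
    (τ : B) :
    ∃ C : ℝ, ∀ (x y : EuclideanSpace ℝ (Fin dim)) (σ : B),
      -- `σ`-component of `h_τ(y) - ĝ_{yx}(h_τ(x))`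
      |(if σ = τ then (0:ℝ) else ∑ θ : Bp, d τ σ θ * g y θ)
          - ∑ μ : B, ∑ θ : Bp,
              (if μ = τ then (0:ℝ) else ∑ ρ : Bp, d τ μ ρ * g x ρ) * d μ σ θ * G y x θ|
        ≤ C * ‖y - x‖ ^ (deg τ - deg σ) := by

  classical
  -- `dp one b c = δ_{b,one} δ_{c,one}`
  have hdp1 : ∀ b c : Bp, dp one b c
      = (if b = one then (1:ℝ) else 0) * (if c = one then (1:ℝ) else 0) := by
    intro b c
    have h := hcomodule τ τ b c
    have hL : ∑ σ : B, d τ σ c * d σ τ b = d τ τ c * d τ τ b := by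
      refine Finset.sum_eq_single τ (fun σ _ hστ => ?_) (fun h => absurd (Finset.mem_univ τ) h)
      by_contra hne
      rcases mul_ne_zero_iff.mp hne with ⟨h1, h2⟩
      rcases htri τ σ c h1 with h3 | h3
      · exact hστ h3
      rcases htri σ τ b h2 with h4 | h4
      · exact hστ h4.symm
      exact absurd h3 (not_lt.mpr h4.le)
    have hR : ∑ θ : Bp, d τ τ θ * dp θ b c = dp one b c := by
      simp [hdiag, ite_mul]
    rw [hL, hR] at h
    rw [← h, hdiag, hdiag]
    ring
  -- `g x one` is constant in `x`
  have hgone : ∀ x y : EuclideanSpace ℝ (Fin dim), g y one = g x one := by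
    intro x y
    rw [hcocycle x y one]
    simp [hdp1, ite_mul, Gone]
  -- key comodule computation
  have hF : ∀ (x y : EuclideanSpace ℝ (Fin dim)) (σ : B),
      ∑ μ : B, (∑ ρ : Bp, d τ μ ρ * g x ρ) * (∑ θ : Bp, d μ σ θ * G y x θ)
        = ∑ η : Bp, d τ σ η * g y η := by
    intro x y σ
    have lhs_eq : ∑ μ : B, (∑ ρ : Bp, d τ μ ρ * g x ρ) * (∑ θ : Bp, d μ σ θ * G y x θ)
        = ∑ θ : Bp, ∑ ρ : Bp, (∑ μ : B, d τ μ ρ * d μ σ θ) * (G y x θ * g x ρ) := by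
      simp_rw [Finset.sum_mul_sum, Finset.sum_mul]
      rw [sum_rot3]
      exact Finset.sum_congr rfl fun θ _ => Finset.sum_congr rfl fun ρ _ =>
        Finset.sum_congr rfl fun μ _ => by ring
    have rhs_eq : (∑ η : Bp, d τ σ η * g y η)
        = ∑ θ : Bp, ∑ ρ : Bp, (∑ η : Bp, d τ σ η * dp η θ ρ) * (G y x θ * g x ρ) := by
      simp_rw [hcocycle x y, Finset.mul_sum, Finset.sum_mul]
      rw [sum_rot3, Finset.sum_comm]
      exact Finset.sum_congr rfl fun θ _ => Finset.sum_congr rfl fun ρ _ =>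
        Finset.sum_congr rfl fun η _ => by ring
    rw [lhs_eq, rhs_eq]
    simp_rw [hcomodule τ σ]
  refine ⟨|g 0 one| * |Cg| * ∑ σ' : B, ∑ θ : Bp, |d τ σ' θ|, fun x y σ => ?_⟩
  have hdτone : (∑ ρ : Bp, d τ τ ρ * g x ρ) = g x one := by
    simp [hdiag, ite_mul]
  -- rewrite the second sum
  have hS : (∑ μ : B, ∑ θ : Bp,
        (if μ = τ then (0:ℝ) else ∑ ρ : Bp, d τ μ ρ * g x ρ) * d μ σ θ * G y x θ)
      = (∑ η : Bp, d τ σ η * g y η) - g x one * ∑ θ : Bp, d τ σ θ * G y x θ := by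
    have h1 : ∀ μ : B, (∑ θ : Bp,
          (if μ = τ then (0:ℝ) else ∑ ρ : Bp, d τ μ ρ * g x ρ) * d μ σ θ * G y x θ)
        = (∑ ρ : Bp, d τ μ ρ * g x ρ) * (∑ θ : Bp, d μ σ θ * G y x θ)
          - (if μ = τ then (∑ ρ : Bp, d τ μ ρ * g x ρ) * (∑ θ : Bp, d μ σ θ * G y x θ) else 0) := by
      intro μ
      split
      · simp
      · rw [sub_zero, Finset.mul_sum]
        exact Finset.sum_congr rfl fun θ _ => by ring
    simp_rw [h1]
    rw [Finset.sum_sub_distrib, hF x y σ, Finset.sum_ite_eq' Finset.univ τ]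
    simp [hdτone]
  rw [hS]
  by_cases hστ : σ = τ
  · rw [if_pos hστ, hστ]
    have h0 : ∑ η : Bp, d τ τ η * g y η = g y one := by simp [hdiag, ite_mul]
    have h1 : ∑ θ : Bp, d τ τ θ * G y x θ = 1 := by simp [hdiag, ite_mul, Gone]
    rw [h0, h1, mul_one, hgone x y, sub_self, sub_zero, abs_zero, sub_self, Real.rpow_zero,
      mul_one]
    positivity
  · rw [if_neg hστ]
    have heq : (∑ θ : Bp, d τ σ θ * g y θ)
        - ((∑ η : Bp, d τ σ η * g y η) - g x one * ∑ θ : Bp, d τ σ θ * G y x θ)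
        = g x one * ∑ θ : Bp, d τ σ θ * G y x θ := by ring
    rw [heq, hgone 0 x]
    have hr0 : (0:ℝ) ≤ ‖y - x‖ ^ (deg τ - deg σ) := Real.rpow_nonneg (norm_nonneg _) _
    have hterm : ∀ θ : Bp, |d τ σ θ * G y x θ|
        ≤ |d τ σ θ| * (|Cg| * ‖y - x‖ ^ (deg τ - deg σ)) := by
      intro θ
      by_cases hd : d τ σ θ = 0
      · simp [hd]
      · rw [abs_mul]
        refine mul_le_mul_of_nonneg_left ?_ (abs_nonneg _)
        calc |G y x θ| ≤ Cg * ‖y - x‖ ^ (degp θ) := hGbound x y θ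
          _ = Cg * ‖y - x‖ ^ (deg τ - deg σ) := by rw [hgradcomp τ σ θ hd]
          _ ≤ |Cg| * ‖y - x‖ ^ (deg τ - deg σ) := mul_le_mul_of_nonneg_right (le_abs_self _) hr0
    calc |g 0 one * ∑ θ : Bp, d τ σ θ * G y x θ|
        ≤ |g 0 one| * ∑ θ : Bp, (|d τ σ θ| * (|Cg| * ‖y - x‖ ^ (deg τ - deg σ))) := by
          rw [abs_mul]
          exact mul_le_mul_of_nonneg_left
            ((Finset.abs_sum_le_sum_abs _ _).trans (Finset.sum_le_sum fun θ _ => hterm θ))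
            (abs_nonneg _)
      _ = |g 0 one| * |Cg| * (∑ θ : Bp, |d τ σ θ|) * ‖y - x‖ ^ (deg τ - deg σ) := by
          rw [← Finset.sum_mul]
          ring
      _ ≤ |g 0 one| * |Cg| * (∑ σ' : B, ∑ θ : Bp, |d τ σ' θ|) * ‖y - x‖ ^ (deg τ - deg σ) := by
          refine mul_le_mul_of_nonneg_right (mul_le_mul_of_nonneg_left ?_ (by positivity)) hr0
          exact Finset.single_le_sum (f := fun σ' => ∑ θ : Bp, |d τ σ' θ|)
            (fun σ' _ => Finset.sum_nonneg fun θ _ => abs_nonneg (d τ σ' θ))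
            (Finset.mem_univ σ)
end

section
/- Let $\boldsymbol{f} = \sum_{\sigma \in \mathcal{B}} f^\sigma(\cdot)\sigma$ be a modelled distribution in $\mathcal{D}^\gamma(\mathscr{T}, \mathsf{g})$. Then for each $\tau \in \mathcal{B}$, the $T^+$-valued function $\boldsymbol{f}/\tau := \sum_{\sigma \geq \tau} f^\sigma(\cdot)(\sigma/\tau)$ is a modelled distribution in $\mathcal{D}^{\gamma - |\tau|}(\mathscr{T}^+, \mathsf{g})$, where $\mathscr{T}^+ = ((T^+, \Delta^+), (T^+, \Delta^+))$. -/
open Finset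

/-- Let `𝒯 = (T⁺, T)` be a concrete regularity structure in coordinates (bases
`B`, `Bp`, homogeneities `deg`, `degp`, coaction constants `d`, coproduct constants `dp`
satisfying the comodule identity and homogeneity compatibility), with model map `g : ℝ^d → G⁺`
and `g_{yx} = g_y * g_x⁻¹` (encoded by `G` with the cocycle relation) satisfying
`|g_{yx}(μ)| ≤ Cg ‖y-x‖^{|μ|}`.  Let `f = ∑_σ f^σ(·) σ ∈ 𝒟^γ(𝒯, g)`.  Then for each `τ ∈ B`,
the `T⁺`-valued function `f/τ := ∑_{σ≥τ} f^σ(·) (σ/τ)` belongs to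
`𝒟^{γ-|τ|}(𝒯⁺, g)`, where `𝒯⁺ = ((T⁺,Δ⁺),(T⁺,Δ⁺))` and `ĝ⁺ = (Id ⊗ g)Δ⁺`. -/
theorem stmt17 {dim : ℕ} {B Bp : Type*} [Fintype B] [Fintype Bp] [DecidableEq B] [DecidableEq Bp]
    (d : B → B → Bp → ℝ) (dp : Bp → Bp → Bp → ℝ) (one : Bp)
    (deg : B → ℝ) (degp : Bp → ℝ)
    (hcomodule : ∀ (τ a : B) (b c : Bp),
      ∑ σ : B, d τ σ c * d σ a b = ∑ θ : Bp, d τ a θ * dp θ b c)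
    (hdiag : ∀ (τ : B) (θ : Bp), d τ τ θ = if θ = one then 1 else 0)
    (htri : ∀ (τ σ : B) (θ : Bp), d τ σ θ ≠ 0 → σ = τ ∨ deg σ < deg τ)
    (hgradcomp : ∀ (τ σ : B) (θ : Bp), d τ σ θ ≠ 0 → degp θ = deg τ - deg σ)
    (hgradcompp : ∀ (κ ρ θ : Bp), dp κ ρ θ ≠ 0 → degp θ = degp κ - degp ρ)
    (g : EuclideanSpace ℝ (Fin dim) → Bp → ℝ)
    (G : EuclideanSpace ℝ (Fin dim) → EuclideanSpace ℝ (Fin dim) → Bp → ℝ)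
    (hcocycle : ∀ x y θ, g y θ = ∑ b : Bp, ∑ c : Bp, dp θ b c * G y x b * g x c)
    (Cg : ℝ) (hGbound : ∀ x y θ, |G y x θ| ≤ Cg * ‖y - x‖ ^ (degp θ))
    (γ : ℝ) (f : EuclideanSpace ℝ (Fin dim) → B → ℝ)
    (Cf : ℝ)
    -- `f ∈ 𝒟^γ(𝒯, g)`: components above level `γ` vanish, components are bounded, and the
    -- modelled-distribution increment bound holds
    (hsupp : ∀ x σ, γ ≤ deg σ → f x σ = 0)
    (hbounded : ∀ x σ, |f x σ| ≤ Cf)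
    (hmodelled : ∀ x y (σ : B),
      |f y σ - ∑ μ : B, ∑ θ : Bp, f x μ * d μ σ θ * G y x θ|
        ≤ Cf * ‖y - x‖ ^ (γ - deg σ))
    (τ : B) :
    ∃ C : ℝ, (∀ x (ρ : Bp), |∑ σ : B, f x σ * d σ τ ρ| ≤ C) ∧
      ∀ x y (ρ : Bp),
        |(∑ σ : B, f y σ * d σ τ ρ)
            - ∑ κ : Bp, ∑ θ : Bp, (∑ σ : B, f x σ * d σ τ κ) * dp κ ρ θ * G y x θ|
          ≤ C * ‖y - x‖ ^ ((γ - deg τ) - degp ρ) := by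

  classical
  set S : ℝ := ∑ σ : B, ∑ ρ : Bp, |d σ τ ρ| with hS
  have hdS : ∀ ρ : Bp, (∑ σ : B, |d σ τ ρ|) ≤ S := by
    intro ρ
    refine Finset.sum_le_sum fun σ _ => ?_
    exact Finset.single_le_sum (f := fun ρ' => |d σ τ ρ'|)
      (fun _ _ => abs_nonneg _) (Finset.mem_univ ρ)
  refine ⟨|Cf| * S, ?_, ?_⟩
  · intro x ρ
    calc |∑ σ : B, f x σ * d σ τ ρ| ≤ ∑ σ : B, |f x σ * d σ τ ρ| :=
          Finset.abs_sum_le_sum_abs _ _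
      _ ≤ ∑ σ : B, |Cf| * |d σ τ ρ| := by
          refine Finset.sum_le_sum fun σ _ => ?_
          rw [abs_mul]
          exact mul_le_mul_of_nonneg_right ((hbounded x σ).trans (le_abs_self _)) (abs_nonneg _)
      _ = |Cf| * ∑ σ : B, |d σ τ ρ| := (Finset.mul_sum _ _ _).symm
      _ ≤ |Cf| * S := mul_le_mul_of_nonneg_left (hdS ρ) (abs_nonneg _)
  · intro x y ρ
    have alg : (∑ σ : B, (∑ μ : B, ∑ θ : Bp, f x μ * d μ σ θ * G y x θ) * d σ τ ρ)
        = ∑ κ : Bp, ∑ θ : Bp, (∑ σ : B, f x σ * d σ τ κ) * dp κ ρ θ * G y x θ := by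
      calc ∑ σ : B, (∑ μ : B, ∑ θ : Bp, f x μ * d μ σ θ * G y x θ) * d σ τ ρ
          = ∑ μ : B, ∑ θ : Bp, (f x μ * G y x θ) * ∑ σ : B, d μ σ θ * d σ τ ρ := by
            simp only [Finset.sum_mul, Finset.mul_sum]
            rw [Finset.sum_comm]
            refine Finset.sum_congr rfl fun μ _ => ?_
            rw [Finset.sum_comm]
            exact Finset.sum_congr rfl fun θ _ => Finset.sum_congr rfl fun σ _ => by ring
        _ = ∑ μ : B, ∑ θ : Bp, (f x μ * G y x θ) * ∑ κ : Bp, d μ τ κ * dp κ ρ θ := by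
            exact Finset.sum_congr rfl fun μ _ => Finset.sum_congr rfl fun θ _ => by
              rw [hcomodule μ τ ρ θ]
        _ = ∑ κ : Bp, ∑ θ : Bp, (∑ σ : B, f x σ * d σ τ κ) * dp κ ρ θ * G y x θ := by
            have swap3 : ∀ (F : B → Bp → Bp → ℝ),
                (∑ μ : B, ∑ θ : Bp, ∑ κ : Bp, F μ θ κ)
                  = ∑ κ : Bp, ∑ θ : Bp, ∑ μ : B, F μ θ κ := by
              intro F
              calc (∑ μ : B, ∑ θ : Bp, ∑ κ : Bp, F μ θ κ)
                  = ∑ θ : Bp, ∑ μ : B, ∑ κ : Bp, F μ θ κ := Finset.sum_comm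
                _ = ∑ θ : Bp, ∑ κ : Bp, ∑ μ : B, F μ θ κ :=
                    Finset.sum_congr rfl fun θ _ => Finset.sum_comm
                _ = ∑ κ : Bp, ∑ θ : Bp, ∑ μ : B, F μ θ κ := Finset.sum_comm
            simp only [Finset.mul_sum]
            rw [swap3 fun μ θ κ => (f x μ * G y x θ) * (d μ τ κ * dp κ ρ θ)]
            simp only [Finset.sum_mul]
            exact Finset.sum_congr rfl fun κ _ => Finset.sum_congr rfl fun θ _ =>
              Finset.sum_congr rfl fun μ _ => by ring
    have key : (∑ σ : B, f y σ * d σ τ ρ)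
        - ∑ κ : Bp, ∑ θ : Bp, (∑ σ : B, f x σ * d σ τ κ) * dp κ ρ θ * G y x θ
        = ∑ σ : B, (f y σ - ∑ μ : B, ∑ θ : Bp, f x μ * d μ σ θ * G y x θ) * d σ τ ρ := by
      rw [← alg]
      rw [← Finset.sum_sub_distrib]
      exact Finset.sum_congr rfl fun σ _ => by ring
    rw [key]
    have hpow : (0:ℝ) ≤ ‖y - x‖ ^ ((γ - deg τ) - degp ρ) :=
      Real.rpow_nonneg (norm_nonneg _) _
    calc |∑ σ : B, (f y σ - ∑ μ : B, ∑ θ : Bp, f x μ * d μ σ θ * G y x θ) * d σ τ ρ|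
        ≤ ∑ σ : B, |(f y σ - ∑ μ : B, ∑ θ : Bp, f x μ * d μ σ θ * G y x θ)| * |d σ τ ρ| := by
          refine (Finset.abs_sum_le_sum_abs _ _).trans ?_
          exact le_of_eq (Finset.sum_congr rfl fun σ _ => abs_mul _ _)
      _ ≤ ∑ σ : B, (|Cf| * ‖y - x‖ ^ ((γ - deg τ) - degp ρ)) * |d σ τ ρ| := by
          refine Finset.sum_le_sum fun σ _ => ?_
          by_cases hd : d σ τ ρ = 0
          · simp [hd]
          · have hρ : degp ρ = deg σ - deg τ := hgradcomp σ τ ρ hd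
            have hexp : γ - deg σ = (γ - deg τ) - degp ρ := by rw [hρ]; ring
            refine mul_le_mul_of_nonneg_right ?_ (abs_nonneg _)
            calc |f y σ - ∑ μ : B, ∑ θ : Bp, f x μ * d μ σ θ * G y x θ|
                ≤ Cf * ‖y - x‖ ^ (γ - deg σ) := hmodelled x y σ
              _ = Cf * ‖y - x‖ ^ ((γ - deg τ) - degp ρ) := by rw [hexp]
              _ ≤ |Cf| * ‖y - x‖ ^ ((γ - deg τ) - degp ρ) :=
                  mul_le_mul_of_nonneg_right (le_abs_self _) hpow
      _ = (|Cf| * ∑ σ : B, |d σ τ ρ|) * ‖y - x‖ ^ ((γ - deg τ) - degp ρ) := by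
          rw [Finset.mul_sum, Finset.sum_mul]
          exact Finset.sum_congr rfl fun σ _ => by ring
      _ ≤ (|Cf| * S) * ‖y - x‖ ^ ((γ - deg τ) - degp ρ) := by
          refine mul_le_mul_of_nonneg_right ?_ hpow
          exact mul_le_mul_of_nonneg_left (hdS ρ) (abs_nonneg _)
end

section
/- Let $T^+$ be a connected graded Hopf algebra with character group $G^+$ (under convolution), and let $T$ be a graded right $T^+$-comodule with triangular coaction as in a concrete regularity structure. Given $\sigma \leq^{(+)} \tau$ basis elements, and $\mathsf{g} : \mathbb{R}^d \to G^+$, one has the finite expansion $\mathsf{g}_{yx}(\tau/\sigma) = \mathsf{g}_y(\tau/\sigma) - \mathsf{g}_x(\tau/\sigma) - \sum_{n \geq 1}(-1)^{n-1}\sum_{\sigma < \sigma_n < \cdots < \sigma_1 < \tau} \mathsf{g}_x(\tau/\sigma_1)\cdots\mathsf{g}_x(\sigma_{n-1}/\sigma_n)\big(\mathsf{g}_y(\sigma_n/\sigma) - \mathsf{g}_x(\sigma_n/\sigma)\big)$, where $\mathsf{g}_{yx} = \mathsf{g}_y * \mathsf{g}_x^{-1}$ and the chains $\sigma < \sigma_n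 < \cdots < \sigma_1 < \tau$ run over basis elements. -/
/-!
Represent a functional `f` on `T⁺` by the matrix `Γ f = (f(μ/η))_{μ,η}`. The comodule identity
makes `Γ` turn convolution into the reversed matrix product, so `g_y = g_{yx} * g_x` reads
`Γ g_y = Γ g_x * Γ g_{yx}`. By triangularity `Γ g_x = 1 + N` with `N` strictly lowering the
homogeneity, hence nilpotent, so `Γ g_{yx} - 1 = ∑_k (-N)^k (Γ g_y - Γ g_x)`; expanding the
`(τ, σ)` entry of `N^k` over paths gives the sum over chains.
-/

open Finset

theorem sub_one_eq_sum_neg_pow_mul {R : Type*} [Ring R] {N b c : R} {K : ℕ} (hN : N ^ K = 0)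
    (h : b = (1 + N) * c) : c - 1 = ∑ i ∈ range K, (-N) ^ i * (b - (1 + N)) := by
  have hinv : (∑ i ∈ range K, (-N) ^ i) * (1 + N) = 1 := by
    have hgeom := geom_sum_mul (-N) K
    rw [neg_pow, hN, mul_zero, zero_sub] at hgeom
    rw [show 1 + N = -(-N - 1) by abel, mul_neg, hgeom, neg_neg]
  rw [← sum_mul, h, ← mul_sub_one, ← mul_assoc, hinv, one_mul]

namespace Matrix

variable {B R : Type*} [Fintype B] [DecidableEq B]

theorem pow_succ_mul_apply_eq_sum_paths [CommSemiring R] (X Y : Matrix B B R) (m : ℕ)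
    (τ σ : B) :
    (X ^ (m + 1) * Y) τ σ =
      ∑ s : Fin (m + 1) → B,
        X τ (s 0) * (∏ i : Fin m, X (s i.castSucc) (s i.succ)) * Y (s (Fin.last m)) σ := by
  induction m generalizing τ with
  | zero =>
    rw [pow_one, mul_apply, ← (Equiv.funUnique (Fin 1) B).symm.sum_comp]
    simp
  | succ m ih =>
    rw [pow_succ', Matrix.mul_assoc, mul_apply,
      ← (Fin.consEquiv fun _ : Fin (m + 2) => B).sum_comp, Fintype.sum_prod_type]
    refine sum_congr rfl fun c _ => ?_
    rw [ih c, mul_sum]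
    refine sum_congr rfl fun t _ => ?_
    simp only [Fin.consEquiv_apply, Fin.cons_zero, Fin.prod_univ_succ, Fin.castSucc_zero,
      Fin.cons_succ, ← Fin.succ_castSucc, ← Fin.succ_last]
    ring

section Nilpotent

variable {α : Type*} [Preorder α] [Semiring R] {deg : B → α} {N : Matrix B B R}

theorem le_card_of_pow_apply_ne_zero [DecidableLT α] (hN : ∀ a b, N a b ≠ 0 → deg b < deg a)
    (k : ℕ) {a b : B} (h : (N ^ k) a b ≠ 0) : k ≤ #{c | deg c < deg a} := by
  induction k generalizing a with
  | zero => exact Nat.zero_le _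
  | succ k ih =>
    rw [pow_succ', mul_apply] at h
    obtain ⟨c, -, hc⟩ := exists_ne_zero_of_sum_ne_zero h
    have hca : deg c < deg a := hN a c (left_ne_zero_of_mul hc)
    have hsub : ({e | deg e < deg c} : Finset B) ⊂ ({e | deg e < deg a} : Finset B) := by
      refine ssubset_iff_of_subset (fun e he => ?_) |>.mpr ⟨c, ?_, ?_⟩
      · simp only [mem_filter, mem_univ, true_and] at he ⊢
        exact he.trans hca
      · simpa using hca
      · simp
    exact (ih (right_ne_zero_of_mul hc)).trans_lt (card_lt_card hsub)

theorem pow_card_eq_zero_of_lt (hN : ∀ a b, N a b ≠ 0 → deg b < deg a) :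
    N ^ Fintype.card B = 0 := by
  classical
  ext a b
  by_contra h
  have hcard := le_card_of_pow_apply_ne_zero hN _ h
  have hlt : #{c | deg c < deg a} < Fintype.card B :=
    card_lt_univ_of_notMem (x := a) (by simp)
  omega

end Nilpotent

theorem pow_succ_sub_one_mul_apply_eq_sum_chains [CommRing R] (A Y : Matrix B B R) (m : ℕ)
    (τ σ : B) (hAdiag : ∀ μ, A μ μ = 1) (hY : Y σ σ = 0) :
    ((A - 1) ^ (m + 1) * Y) τ σ =
      ∑ s : Fin (m + 1) → B,
        if (s 0 ≠ τ ∧ (∀ i : Fin m, s i.succ ≠ s i.castSucc) ∧ s (Fin.last m) ≠ σ) then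
          A τ (s 0) * (∏ i : Fin m, A (s i.castSucc) (s i.succ)) * Y (s (Fin.last m)) σ
        else 0 := by
  have hoff : ∀ μ η, η ≠ μ → (A - 1) μ η = A μ η := fun μ η h => by
    rw [sub_apply, one_apply_ne' h, sub_zero]
  have hdiag : ∀ μ, (A - 1) μ μ = 0 := fun μ => by rw [sub_apply, one_apply_eq, hAdiag, sub_self]
  rw [pow_succ_mul_apply_eq_sum_paths]
  refine sum_congr rfl fun s _ => ?_
  split_ifs with hc
  · obtain ⟨h0, hmid, -⟩ := hc
    rw [hoff _ _ h0, prod_congr rfl fun i _ => hoff _ _ (hmid i)]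
  · simp only [not_and_or, not_not, not_forall] at hc
    rcases hc with h0 | ⟨i, hi⟩ | hl
    · rw [h0, hdiag, zero_mul, zero_mul]
    · rw [prod_eq_zero (mem_univ i) (by rw [hi, hdiag]), mul_zero, zero_mul]
    · rw [hl, hY, mul_zero]

theorem apply_eq_sub_sub_sum_chains [CommRing R] {α : Type*} [Preorder α] (deg : B → α)
    {A Bm C : Matrix B B R} (hmul : Bm = A * C) (hAdiag : ∀ μ, A μ μ = 1)
    (hBdiag : ∀ μ, Bm μ μ = 1) (hA : ∀ μ η, η ≠ μ → A μ η ≠ 0 → deg η < deg μ)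
    {τ σ : B} (hne : σ ≠ τ) :
    C τ σ = Bm τ σ - A τ σ -
      ∑ m ∈ range (Fintype.card B), (-1 : R) ^ m *
        ∑ s : Fin (m + 1) → B,
          if (s 0 ≠ τ ∧ (∀ i : Fin m, s i.succ ≠ s i.castSucc) ∧ s (Fin.last m) ≠ σ) then
            A τ (s 0) * (∏ i : Fin m, A (s i.castSucc) (s i.succ)) *
              (Bm (s (Fin.last m)) σ - A (s (Fin.last m)) σ)
          else 0 := by
  have hN : ∀ μ η, (A - 1) μ η ≠ 0 → deg η < deg μ := by
    intro μ η h
    obtain rfl | hne := eq_or_ne η μ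
    · simp [hAdiag] at h
    · exact hA μ η hne (by simpa [one_apply_ne' hne] using h)
  have hnil : (A - 1) ^ (Fintype.card B + 1) = 0 := by
    rw [pow_succ, pow_card_eq_zero_of_lt hN, zero_mul]
  have hexp := sub_one_eq_sum_neg_pow_mul (b := Bm) (c := C) hnil (by rwa [add_sub_cancel])
  rw [add_sub_cancel] at hexp
  have hC : C τ σ = (C - 1) τ σ := by rw [sub_apply, one_apply_ne' hne, sub_zero]
  have hM : (Bm - A) σ σ = 0 := by rw [sub_apply, hAdiag, hBdiag, sub_self]
  rw [hC, hexp, sum_apply, sum_range_succ', pow_zero, Matrix.one_mul, sub_apply, add_comm,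
    ← sub_neg_eq_add]
  congr 1
  rw [neg_eq_iff_eq_neg, ← sum_neg_distrib]
  refine sum_congr rfl fun m _ => ?_
  rw [← neg_one_smul R (A - 1), smul_pow, smul_mul, smul_apply, smul_eq_mul,
    pow_succ_sub_one_mul_apply_eq_sum_chains A _ m τ σ hAdiag hM, pow_succ]
  simp only [sub_apply, mul_neg_one, neg_mul]

end Matrix

section Coaction

variable {B Bp R : Type*} [Fintype Bp] [CommSemiring R]

/-- `coactionMatrix d f μ η` is the paper's `f(μ/η)`. -/
def coactionMatrix (d : B → B → Bp → R) (f : Bp → R) : Matrix B B R :=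
  Matrix.of fun μ η => ∑ θ, d μ η θ * f θ

def convolution (dp : Bp → Bp → Bp → R) (f h : Bp → R) : Bp → R :=
  fun θ => ∑ b, ∑ c, dp θ b c * f b * h c

theorem coactionMatrix_convolution [Fintype B] {d : B → B → Bp → R} {dp : Bp → Bp → Bp → R}
    (hcomodule : ∀ τ a b c, ∑ σ, d τ σ c * d σ a b = ∑ θ, d τ a θ * dp θ b c) (f h : Bp → R) :
    coactionMatrix d (convolution dp f h) = coactionMatrix d h * coactionMatrix d f := by
  ext μ η
  calc ∑ θ, d μ η θ * ∑ b, ∑ c, dp θ b c * f b * h c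
      = ∑ b, ∑ c, (∑ θ, d μ η θ * dp θ b c) * (f b * h c) := by
        simp only [mul_sum, sum_mul]
        rw [sum_comm]
        refine sum_congr rfl fun b _ => ?_
        rw [sum_comm]
        exact sum_congr rfl fun c _ => sum_congr rfl fun θ _ => by ring
    _ = ∑ b, ∑ e, ∑ c, d μ e c * d e η b * (f b * h c) := by
        simp only [← hcomodule, sum_mul]
        exact sum_congr rfl fun b _ => sum_comm
    _ = ∑ e, (∑ c, d μ e c * h c) * ∑ b, d e η b * f b := by
        rw [sum_comm]
        refine sum_congr rfl fun e _ => ?_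
        rw [sum_mul_sum, sum_comm]
        exact sum_congr rfl fun b _ => sum_congr rfl fun c _ => by ring

theorem coactionMatrix_apply_self [DecidableEq Bp] {d : B → B → Bp → R} {one : Bp}
    (hdiag : ∀ τ θ, d τ τ θ = if θ = one then 1 else 0) {f : Bp → R} (hf : f one = 1) (μ : B) :
    coactionMatrix d f μ μ = 1 := by
  simp [coactionMatrix, hdiag, hf]

theorem coactionMatrix_apply_ne_zero {α : Type*} [Preorder α] {d : B → B → Bp → R}
    {deg : B → α} (htri : ∀ τ σ θ, d τ σ θ ≠ 0 → σ = τ ∨ deg σ < deg τ) (f : Bp → R)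
    {μ η : B} (hne : η ≠ μ) (h : coactionMatrix d f μ η ≠ 0) : deg η < deg μ := by
  obtain ⟨θ, -, hθ⟩ := exists_ne_zero_of_sum_ne_zero h
  exact (htri μ η θ (left_ne_zero_of_mul hθ)).resolve_left hne

end Coaction

theorem stmt19_general {dim : ℕ} {B Bp : Type*} [Fintype B] [Fintype Bp] [DecidableEq B] [DecidableEq Bp]
    (d : B → B → Bp → ℝ) (dp : Bp → Bp → Bp → ℝ) (one : Bp) (deg : B → ℝ)
    (hcomodule : ∀ (τ a : B) (b c : Bp),
      ∑ σ : B, d τ σ c * d σ a b = ∑ θ : Bp, d τ a θ * dp θ b c)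
    (hdiag : ∀ (τ : B) (θ : Bp), d τ τ θ = if θ = one then 1 else 0)
    (htri : ∀ (τ σ : B) (θ : Bp), d τ σ θ ≠ 0 → σ = τ ∨ deg σ < deg τ)
    (g : EuclideanSpace ℝ (Fin dim) → Bp → ℝ)
    (hgchar : ∀ x, g x one = 1)
    (G : EuclideanSpace ℝ (Fin dim) → EuclideanSpace ℝ (Fin dim) → Bp → ℝ)
    -- `g_y = g_{yx} * g_x`
    (hcocycle : ∀ x y θ, g y θ = ∑ b : Bp, ∑ c : Bp, dp θ b c * G y x b * g x c)
    (x y : EuclideanSpace ℝ (Fin dim)) (τ σ : B) (hne : σ ≠ τ) :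
    (∑ θ : Bp, d τ σ θ * G y x θ)
      = (∑ θ : Bp, d τ σ θ * g y θ) - (∑ θ : Bp, d τ σ θ * g x θ)
        - ∑ m ∈ Finset.range (Fintype.card B), ((-1 : ℝ) ^ m) *
            ∑ s : Fin (m + 1) → B,
              if (s 0 ≠ τ ∧ (∀ i : Fin m, s i.succ ≠ s i.castSucc) ∧ s (Fin.last m) ≠ σ) then
                (∑ θ : Bp, d τ (s 0) θ * g x θ) *
                (∏ i : Fin m, (∑ θ : Bp, d (s i.castSucc) (s i.succ) θ * g x θ)) *
                ((∑ θ : Bp, d (s (Fin.last m)) σ θ * g y θ)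
                  - (∑ θ : Bp, d (s (Fin.last m)) σ θ * g x θ))
              else 0 := by
  have hmul : coactionMatrix d (g y) = coactionMatrix d (g x) * coactionMatrix d (G y x) := by
    rw [← coactionMatrix_convolution hcomodule]
    exact congrArg _ (funext (hcocycle x y))
  exact Matrix.apply_eq_sub_sub_sum_chains deg hmul (coactionMatrix_apply_self hdiag (hgchar x))
    (coactionMatrix_apply_self hdiag (hgchar y))
    (fun _ _ => coactionMatrix_apply_ne_zero htri _) hne

/-- In a concrete regularity structure given in coordinates (basis `B` of the
graded right comodule `T` with homogeneity `deg` and triangular coaction constants `d`, basis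
`Bp` of the connected graded Hopf algebra `T⁺` with coproduct constants `dp` and unit basis
element `one`), let `g : ℝ^d → G⁺` be a map into the character group and
`g_{yx} = g_y * g_x⁻¹`, encoded by `G` and the cocycle relation `g_y = g_{yx} * g_x`.  Then for
basis elements `σ ≤ τ` one has the finite chain expansion
`g_{yx}(τ/σ) = g_y(τ/σ) - g_x(τ/σ) - ∑_{n≥1}(-1)^{n-1} ∑_{σ<σ_n<⋯<σ_1<τ}
   g_x(τ/σ_1)⋯g_x(σ_{n-1}/σ_n)(g_y(σ_n/σ) - g_x(σ_n/σ))`,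
where `g(μ/η) = ∑_θ (Δμ)^{ηθ} g(θ)` vanishes unless `η ≤ μ`, so the chain sums may be taken
over all adjacent-distinct tuples; chains have length at most `card B`. -/
theorem stmt19 {dim : ℕ} {B Bp : Type*} [Fintype B] [Fintype Bp] [DecidableEq B] [DecidableEq Bp]
    (d : B → B → Bp → ℝ) (dp : Bp → Bp → Bp → ℝ) (one : Bp) (deg : B → ℝ)
    (hcomodule : ∀ (τ a : B) (b c : Bp),
      ∑ σ : B, d τ σ c * d σ a b = ∑ θ : Bp, d τ a θ * dp θ b c)
    (hcoassoc : ∀ (τ a b c : Bp),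
      ∑ σ : Bp, dp τ σ c * dp σ a b = ∑ θ : Bp, dp τ a θ * dp θ b c)
    (hcounitl : ∀ θ c : Bp, dp θ one c = if c = θ then 1 else 0)
    (hcounitr : ∀ θ b : Bp, dp θ b one = if b = θ then 1 else 0)
    (hdiag : ∀ (τ : B) (θ : Bp), d τ τ θ = if θ = one then 1 else 0)
    (htri : ∀ (τ σ : B) (θ : Bp), d τ σ θ ≠ 0 → σ = τ ∨ deg σ < deg τ)
    (g : EuclideanSpace ℝ (Fin dim) → Bp → ℝ)
    (hgchar : ∀ x, g x one = 1)
    (G : EuclideanSpace ℝ (Fin dim) → EuclideanSpace ℝ (Fin dim) → Bp → ℝ)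
    (Gone : ∀ x y, G y x one = 1)
    -- `g_y = g_{yx} * g_x`
    (hcocycle : ∀ x y θ, g y θ = ∑ b : Bp, ∑ c : Bp, dp θ b c * G y x b * g x c)
    (x y : EuclideanSpace ℝ (Fin dim)) (τ σ : B) (hne : σ ≠ τ)
    (hle : (fun θ => d τ σ θ) ≠ 0) :
    (∑ θ : Bp, d τ σ θ * G y x θ)
      = (∑ θ : Bp, d τ σ θ * g y θ) - (∑ θ : Bp, d τ σ θ * g x θ)
        - ∑ m ∈ Finset.range (Fintype.card B), ((-1 : ℝ) ^ m) *
            ∑ s : Fin (m + 1) → B,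
              if (s 0 ≠ τ ∧ (∀ i : Fin m, s i.succ ≠ s i.castSucc) ∧ s (Fin.last m) ≠ σ) then
                (∑ θ : Bp, d τ (s 0) θ * g x θ) *
                (∏ i : Fin m, (∑ θ : Bp, d (s i.castSucc) (s i.succ) θ * g x θ)) *
                ((∑ θ : Bp, d (s (Fin.last m)) σ θ * g y θ)
                  - (∑ θ : Bp, d (s (Fin.last m)) σ θ * g x θ))
              else 0 :=
  stmt19_general d dp one deg hcomodule hdiag htri g hgchar G hcocycle x y τ σ hne
end
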